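/- arXiv:2409.08113 — 2 statements merged into one kernel-verified Lean document; each statement's English description precedes it below -/
import Mathlib

section
/- The Hecke algebra 𝓗(G ⫽ K) = L¹(G)^{K×K} of K-biinvariant integrable functions on G is commutative under convolution. -/
/-!
STATEMENT 2 (Gelfand):
The Hecke algebra `𝓗(G ⫽ K) = L¹(G)^{K×K}` of `K`-biinvariant integrable functions on a real
reductive group `G` is commutative under convolution.  The context (Cartan involution `θ` with
`K = G^θ`, the decomposition `G = KAK` with `θ(a) = a⁻¹` on `A`, so that the Gelfand
anti-involution `τ(g) = θ(g⁻¹)` fixes `A` pointwise, and the Haar measure, which is two-sided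
invariant and `θ`-invariant) is encoded as hypotheses.  Commutativity of convolution of two
`L¹`-functions is stated as an almost-everywhere identity.
-/

open MeasureTheory

theorem stmt_2 {G : Type*} [Group G] [TopologicalSpace G] [IsTopologicalGroup G]
    [MeasurableSpace G] [BorelSpace G] [LocallyCompactSpace G]
    -- Haar measure on G (G reductive, hence unimodular: two-sided invariant)
    (μ : Measure G) [μ.IsHaarMeasure] [μ.IsMulRightInvariant]
    -- the maximal compact subgroup K = G^θ and the subgroup A = exp 𝔞
    (K A : Subgroup G) (hKcomp : IsCompact (K : Set G))
    -- the Cartan involution θ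
    (θ : G ≃* G) (hθinv : ∀ g, θ (θ g) = g) (hθcont : Continuous θ)
    (hθK : ∀ g : G, θ g = g ↔ g ∈ K)
    (hθA : ∀ a ∈ A, θ a = a⁻¹)
    (hθμ : MeasurePreserving θ μ μ)
    -- the decomposition G = K A K
    (hKAK : ∀ g : G, ∃ k₁ ∈ K, ∃ a ∈ A, ∃ k₂ ∈ K, g = k₁ * a * k₂)
    -- two K-biinvariant L¹ functions
    (f₁ f₂ : G → ℂ) (hf₁ : Integrable f₁ μ) (hf₂ : Integrable f₂ μ)
    (hbi₁ : ∀ k ∈ K, ∀ k' ∈ K, ∀ g : G, f₁ (k * g * k') = f₁ g)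
    (hbi₂ : ∀ k ∈ K, ∀ k' ∈ K, ∀ g : G, f₂ (k * g * k') = f₂ g) :
    -- f₁ * f₂ = f₂ * f₁ in L¹(G)
    ∀ᵐ g ∂μ, ∫ x, f₁ x * f₂ (x⁻¹ * g) ∂μ = ∫ x, f₂ x * f₁ (x⁻¹ * g) ∂μ := by

  -- θ as a measurable equivalence
  have hsymm : ⇑θ.symm = ⇑θ := funext fun x =>
    θ.injective (by rw [MulEquiv.apply_symm_apply, hθinv])
  let e : G ≃ᵐ G :=
    { toEquiv := θ.toEquiv
      measurable_toFun := hθcont.measurable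
      measurable_invFun := by
        show Measurable ⇑θ.toEquiv.symm
        have : ⇑θ.toEquiv.symm = ⇑θ := hsymm
        rw [this]; exact hθcont.measurable }
  -- substitution by θ
  have hθint : ∀ F : G → ℂ, ∫ x, F (θ x) ∂μ = ∫ x, F x ∂μ := fun F =>
    hθμ.integral_comp e.measurableEmbedding F
  -- θ fixes K pointwise
  have hθk : ∀ k ∈ K, θ k = k := fun k hk => (hθK k).2 hk
  -- biinvariant functions are invariant under the Gelfand anti-involution τ(g) = θ(g⁻¹)
  have hτ : ∀ f : G → ℂ, (∀ k ∈ K, ∀ k' ∈ K, ∀ g : G, f (k * g * k') = f g) →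
      ∀ g : G, f (θ (g⁻¹)) = f g := by
    intro f hbi g
    obtain ⟨k₁, hk₁, a, ha, k₂, hk₂, rfl⟩ := hKAK g
    have h1 : θ ((k₁ * a * k₂)⁻¹) = k₂⁻¹ * a * k₁⁻¹ := by
      rw [mul_inv_rev, mul_inv_rev, map_mul, map_mul, map_inv, map_inv, map_inv,
        hθk k₁ hk₁, hθk k₂ hk₂, hθA a ha, inv_inv, ← mul_assoc]
    rw [h1, hbi k₂⁻¹ (inv_mem hk₂) k₁⁻¹ (inv_mem hk₁) a, hbi k₁ hk₁ k₂ hk₂ a]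
  -- convolution of biinvariant functions is biinvariant
  have hconv : ∀ k ∈ K, ∀ k' ∈ K, ∀ g : G,
      (∫ x, f₂ x * f₁ (x⁻¹ * (k * g * k')) ∂μ) = ∫ x, f₂ x * f₁ (x⁻¹ * g) ∂μ := by
    intro k hk k' hk' g
    calc (∫ x, f₂ x * f₁ (x⁻¹ * (k * g * k')) ∂μ)
        = ∫ x, f₂ (k * x) * f₁ ((k * x)⁻¹ * (k * g * k')) ∂μ :=
          (integral_mul_left_eq_self (fun x => f₂ x * f₁ (x⁻¹ * (k * g * k'))) k).symm
      _ = ∫ x, f₂ x * f₁ (x⁻¹ * g) ∂μ := by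
          congr 1; funext x
          have e1 : f₂ (k * x) = f₂ x := by
            simpa using hbi₂ k hk 1 K.one_mem x
          have e2 : (k * x)⁻¹ * (k * g * k') = x⁻¹ * g * k' := by group
          have e3 : f₁ (x⁻¹ * g * k') = f₁ (x⁻¹ * g) := by
            simpa using hbi₁ 1 K.one_mem k' hk' (x⁻¹ * g)
          rw [e1, e2, e3]
  refine ae_of_all μ fun g => ?_
  obtain ⟨k₁, hk₁, a, ha, k₂, hk₂, hg⟩ := hKAK g
  have hg' : θ (g⁻¹) = k₂⁻¹ * a * k₁⁻¹ := by
    rw [hg, mul_inv_rev, mul_inv_rev, map_mul, map_mul, map_inv, map_inv, map_inv,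
      hθk k₁ hk₁, hθk k₂ hk₂, hθA a ha, inv_inv, ← mul_assoc]
  calc (∫ x, f₁ x * f₂ (x⁻¹ * g) ∂μ)
      = ∫ x, f₁ (g * x) * f₂ ((g * x)⁻¹ * g) ∂μ :=
        (integral_mul_left_eq_self (fun x => f₁ x * f₂ (x⁻¹ * g)) g).symm
    _ = ∫ x, f₂ (θ x) * f₁ ((θ x)⁻¹ * θ (g⁻¹)) ∂μ := by
        congr 1; funext x
        have e1 : f₁ (g * x) = f₁ ((θ x)⁻¹ * θ (g⁻¹)) := by
          have h := hτ f₁ hbi₁ (g * x)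
          have h2 : θ ((g * x)⁻¹) = (θ x)⁻¹ * θ (g⁻¹) := by
            rw [mul_inv_rev, map_mul, map_inv]
          rw [h2] at h
          exact h.symm
        have e2 : f₂ ((g * x)⁻¹ * g) = f₂ (θ x) := by
          have h : (g * x)⁻¹ * g = x⁻¹ := by group
          have h3 := hτ f₂ hbi₂ x⁻¹
          rw [inv_inv] at h3
          rw [h, ← h3]
        rw [e1, e2]; ring
    _ = ∫ x, f₂ x * f₁ (x⁻¹ * θ (g⁻¹)) ∂μ :=
        hθint (fun y => f₂ y * f₁ (y⁻¹ * θ (g⁻¹)))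
    _ = ∫ x, f₂ x * f₁ (x⁻¹ * g) ∂μ := by
        rw [hg', hg]
        exact (hconv k₂⁻¹ (inv_mem hk₂) k₁⁻¹ (inv_mem hk₁) a).trans
          (hconv k₁ hk₁ k₂ hk₂ a).symm
end

section
/- Let 𝔞 act on a finite-dimensional complex vector space V so that every X ∈ 𝔞 acts with only purely imaginary eigenvalues, and suppose v ∈ V decomposes as v = Σ_{k=1}^N v_k where the v_k are joint eigenvectors for the 𝔞-action with pairwise distinct eigencharacters. Then lim_{n→∞} A_n(v) = Σ_{k=1}^N ‖F v_k‖². -/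
/-!
STATEMENT 16 (Lemma on oscillatory means, part (i)):
`𝔞` is a finite-dimensional real abelian Lie algebra acting (by commuting operators, each with
purely imaginary spectrum) on a finite-dimensional complex vector space `V`; `X₁, …, X_m` is a
basis of `𝔞`, `c > 0` is irrational, `X_{j+m} = c • X_j`; `F : V → H` is a linear map to an inner
product space. For `n ∈ ℕ`,
`A n v = n^{-2m} ∑_{t : tuples with n+1 ≤ t_j ≤ 2n} ‖F (exp(ρ(∑ t_j X_j)) v)‖²`.
If `v = ∑_{k=1}^N v_k` with the `v_k` joint eigenvectors with pairwise distinct (purely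
imaginary) eigencharacters, then `A n v → ∑_k ‖F v_k‖²` as `n → ∞`.
-/

open MeasureTheory Filter Finset


lemma aux_exp_eigen {V : Type*} [NormedAddCommGroup V] [NormedSpace ℂ V] [CompleteSpace V]
    (T : V →L[ℂ] V) (lam : ℂ) (w : V) (h : T w = lam • w) :
    NormedSpace.exp T w = Complex.exp lam • w := by
  have hpow : ∀ n : ℕ, (T ^ n) w = lam ^ n • w := by
    intro n
    induction n with
    | zero => simp
    | succ n ih =>
      rw [pow_succ, ContinuousLinearMap.mul_apply, h, _root_.map_smul, ih, smul_smul]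
      ring_nf
  have hs : Summable (fun n : ℕ => ((n.factorial : ℂ))⁻¹ • T ^ n) :=
    NormedSpace.expSeries_summable' (𝕂 := ℂ) T
  have hs2 : Summable (fun n : ℕ => ((n.factorial : ℂ))⁻¹ • lam ^ n) :=
    NormedSpace.expSeries_summable' (𝕂 := ℂ) lam
  rw [NormedSpace.exp_eq_tsum ℂ]
  have := (ContinuousLinearMap.apply ℂ V w).map_tsum hs
  simp only [ContinuousLinearMap.apply_apply] at this
  rw [this]
  simp only [ContinuousLinearMap.smul_apply, hpow, smul_smul]
  rw [show Complex.exp lam = ∑' n : ℕ, ((n.factorial : ℂ))⁻¹ • lam ^ n by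
    rw [Complex.exp_eq_exp_ℂ, NormedSpace.exp_eq_tsum ℂ]]
  rw [← Summable.tsum_smul_const hs2]
  simp [smul_smul]

lemma aux_geo_bound (z : ℂ) (hz : ‖z‖ = 1) (hz1 : z ≠ 1) (n : ℕ) :
    ‖∑ a ∈ Finset.Icc (n + 1) (2 * n), z ^ a‖ ≤ 2 / ‖z - 1‖ := by
  rw [← Finset.Ico_add_one_right_eq_Icc, geom_sum_Ico hz1 (by omega)]
  rw [norm_div]
  gcongr
  calc ‖z ^ (2 * n + 1) - z ^ (n + 1)‖ ≤ ‖z ^ (2 * n + 1)‖ + ‖z ^ (n + 1)‖ := norm_sub_le _ _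
  _ ≤ 2 := by rw [norm_pow, norm_pow, hz]; norm_num

lemma aux_conj_exp (z : ℂ) (h : z.re = 0) :
    (starRingEnd ℂ) (Complex.exp z) = Complex.exp (-z) := by
  rw [← Complex.exp_conj]
  congr 1
  apply Complex.ext <;> simp [h]

theorem stmt_16
    {𝔞 : Type*} [AddCommGroup 𝔞] [Module ℝ 𝔞]
    {V : Type*} [NormedAddCommGroup V] [NormedSpace ℂ V] [FiniteDimensional ℂ V]
    {H : Type*} [NormedAddCommGroup H] [InnerProductSpace ℂ H]
    -- the basis X₁,…,X_m of 𝔞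
    (m : ℕ) (hm : 0 < m) (X : Fin m → 𝔞) (hXbasis : LinearIndependent ℝ X)
    (hXspan : Submodule.span ℝ (Set.range X) = ⊤)
    -- the positive irrational number c and the extended family X₁,…,X_{2m}
    (c : ℝ) (hc : 0 < c) (hcirr : Irrational c)
    (Y : Fin (2 * m) → 𝔞)
    (hY : ∀ j : Fin (2 * m), Y j =
      if h : (j : ℕ) < m then X ⟨j, h⟩
      else c • X ⟨(j : ℕ) - m, by have := j.2; omega⟩)
    -- the linear action of 𝔞 on V by commuting operators with purely imaginary spectrum
    (ρ : 𝔞 →ₗ[ℝ] (V →L[ℂ] V))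
    (hcomm : ∀ X' Y' : 𝔞, Commute (ρ X') (ρ Y'))
    (himag : ∀ X' : 𝔞, ∀ z ∈ spectrum ℂ (ρ X'), z.re = 0)
    -- the linear map F : V → H
    (F : V →ₗ[ℂ] H)
    -- the averages A_n
    (A : ℕ → V → ℝ)
    (hA : ∀ n v, A n v = ((n : ℝ) ^ (2 * m))⁻¹ *
      ∑ t ∈ Fintype.piFinset (fun _ : Fin (2 * m) => Finset.Icc (n + 1) (2 * n)),
        ‖F (NormedSpace.exp (ρ (∑ j, (t j : ℝ) • Y j)) v)‖ ^ 2)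
    -- the decomposition of v into joint eigenvectors with distinct eigencharacters
    (N : ℕ) (v : V) (vk : Fin N → V) (χ : Fin N → (𝔞 → ℂ))
    (hv : v = ∑ k, vk k)
    (heig : ∀ (k : Fin N) (X' : 𝔞), ρ X' (vk k) = χ k X' • vk k)
    (him : ∀ (k : Fin N) (X' : 𝔞), (χ k X').re = 0)
    (hdist : Function.Injective χ) :
    Tendsto (fun n => A n v) atTop (nhds (∑ k, ‖F (vk k)‖ ^ 2)) := by
  classical
  -- abbreviations
  set e : Fin N → (Fin (2 * m) → ℕ) → ℂ :=
    fun k t => Complex.exp (χ k (∑ j, (t j : ℝ) • Y j)) with he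
  set B : ℕ → Fin N → Fin N → ℂ := fun n k l =>
    ((n : ℂ) ^ (2 * m))⁻¹ *
      ∑ t ∈ Fintype.piFinset (fun _ : Fin (2 * m) => Finset.Icc (n + 1) (2 * n)),
        (starRingEnd ℂ) (e k t) * e l t with hB
  -- key linearity of the eigencharacters on nonzero eigenvectors
  have hkey : ∀ (k' : Fin N), vk k' ≠ 0 → ∀ (p : ℕ) (r : Fin p → ℝ) (W : Fin p → 𝔞),
      χ k' (∑ j, r j • W j) = ∑ j, (r j : ℂ) * χ k' (W j) := by
    intro k' hk' p r W
    have h1 : ρ (∑ j, r j • W j) (vk k') = (∑ j, (r j : ℂ) * χ k' (W j)) • vk k' := by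
      rw [map_sum, ContinuousLinearMap.sum_apply, Finset.sum_smul]
      refine Finset.sum_congr rfl fun j _ => ?_
      rw [_root_.map_smul, ContinuousLinearMap.smul_apply, heig, ← Complex.real_smul, smul_assoc]
    rw [heig] at h1
    exact smul_left_injective ℂ hk' h1
  -- rewriting A in terms of B
  have hAeq : ∀ n, A n v = ∑ k, ∑ l,
      (B n k l * (inner ℂ (F (vk k)) (F (vk l)) : ℂ)).re := by
    intro n
    rw [hA]
    have hnorm : ∀ t : Fin (2 * m) → ℕ,
        ‖F (NormedSpace.exp (ρ (∑ j, (t j : ℝ) • Y j)) v)‖ ^ 2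
          = (∑ k, ∑ l, (starRingEnd ℂ) (e k t) * e l t *
              (inner ℂ (F (vk k)) (F (vk l)) : ℂ)).re := by
      intro t
      have hexp : NormedSpace.exp (ρ (∑ j, (t j : ℝ) • Y j)) v = ∑ k, e k t • vk k := by
        rw [hv, map_sum]
        exact Finset.sum_congr rfl fun k _ =>
          aux_exp_eigen _ _ _ (heig k (∑ j, (t j : ℝ) • Y j))
      rw [hexp, ← inner_self_eq_norm_sq (𝕜 := ℂ), RCLike.re_to_complex]
      congr 1
      rw [map_sum, sum_inner]
      refine Finset.sum_congr rfl fun k _ => ?_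
      rw [inner_sum]
      refine Finset.sum_congr rfl fun l _ => ?_
      rw [_root_.map_smul, _root_.map_smul, inner_smul_left, inner_smul_right]
      ring
    simp only [hnorm, hB]
    trans (∑ k : Fin N, ∑ l : Fin N,
      (((n : ℂ) ^ (2 * m))⁻¹ *
        ∑ t ∈ Fintype.piFinset (fun _ : Fin (2 * m) => Finset.Icc (n + 1) (2 * n)),
          (starRingEnd ℂ) (e k t) * e l t) * (inner ℂ (F (vk k)) (F (vk l)) : ℂ)).re
    · rw [← Complex.re_sum _ _, ← Complex.re_ofReal_mul]
      congr 1
      push_cast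
      simp only [Finset.mul_sum, Finset.sum_mul]
      rw [Finset.sum_comm]
      refine Finset.sum_congr rfl fun k _ => ?_
      rw [Finset.sum_comm]
      refine Finset.sum_congr rfl fun l _ => ?_
      refine Finset.sum_congr rfl fun t _ => ?_
      ring
    · rw [Complex.re_sum _ _]
      exact Finset.sum_congr rfl fun k _ => Complex.re_sum _ _
  -- diagonal terms
  have hdiag : ∀ k : Fin N, Tendsto
      (fun n => (B n k k * (inner ℂ (F (vk k)) (F (vk k)) : ℂ)).re) atTop
      (nhds (‖F (vk k)‖ ^ 2)) := by
    intro k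
    refine Tendsto.congr' ?_ tendsto_const_nhds
    filter_upwards [eventually_ge_atTop 1] with n hn
    have h1 : ∀ t : Fin (2 * m) → ℕ, (starRingEnd ℂ) (e k t) * e k t = 1 := by
      intro t
      simp only [he]
      rw [aux_conj_exp _ (him k _), ← Complex.exp_add, neg_add_cancel, Complex.exp_zero]
    have hcard : (Fintype.piFinset fun _ : Fin (2 * m) => Finset.Icc (n + 1) (2 * n)).card
        = n ^ (2 * m) := by
      rw [Fintype.card_piFinset]
      have : (Finset.Icc (n + 1) (2 * n)).card = n := by
        rw [Nat.card_Icc]; omega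
      simp [this]
    have hb : B n k k = 1 := by
      rw [hB]
      dsimp only
      simp only [h1, Finset.sum_const, hcard, nsmul_eq_mul, mul_one]
      rw [Nat.cast_pow]
      exact inv_mul_cancel₀ (pow_ne_zero _ (Nat.cast_ne_zero.2 (by omega)))
    rw [hb, one_mul, ← inner_self_eq_norm_sq (𝕜 := ℂ), RCLike.re_to_complex]
  -- off-diagonal terms
  have hoff : ∀ k l : Fin N, k ≠ l → Tendsto
      (fun n => (B n k l * (inner ℂ (F (vk k)) (F (vk l)) : ℂ)).re) atTop
      (nhds 0) := by
    intro k l hkl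
    by_cases hk0 : vk k = 0
    · simp only [hk0, map_zero, inner_zero_left, mul_zero, Complex.zero_re]
      exact tendsto_const_nhds
    by_cases hl0 : vk l = 0
    · simp only [hl0, map_zero, inner_zero_right, mul_zero, Complex.zero_re]
      exact tendsto_const_nhds
    -- find a basis vector where the characters differ
    obtain ⟨j, hj⟩ : ∃ j : Fin m, χ l (X j) ≠ χ k (X j) := by
      by_contra hco; push_neg at hco
      refine hkl (hdist (funext fun a => ?_))
      set b : Module.Basis (Fin m) ℝ 𝔞 := Module.Basis.mk hXbasis (by rw [hXspan]) with hbdef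
      have hrep : a = ∑ i, b.repr a i • X i := by
        conv_lhs => rw [← b.sum_repr a]
        simp [hbdef, Module.Basis.coe_mk]
      rw [hrep, hkey k hk0 _ _ _, hkey l hl0 _ _ _]
      exact Finset.sum_congr rfl fun i _ => by rw [hco i]
    set d : ℂ := χ l (X j) - χ k (X j) with hddef
    have hdne : d ≠ 0 := sub_ne_zero.2 hj
    have hsmul : ∀ k' : Fin N, vk k' ≠ 0 → ∀ (r : ℝ) (a : 𝔞),
        χ k' (r • a) = (r : ℂ) * χ k' a := by
      intro k' h r a
      have := hkey k' h 1 (fun _ => r) (fun _ => a)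
      simpa using this
    set w : Fin (2 * m) → ℂ := fun j' => Complex.exp (χ l (Y j') - χ k (Y j')) with hwdef
    have hw : ∀ j' : Fin (2 * m), ‖w j'‖ = 1 := by
      intro j'
      simp only [hwdef]
      rw [Complex.norm_exp]
      simp [him]
    obtain ⟨j₁, hj1v⟩ : ∃ j₁ : Fin (2 * m), (j₁ : ℕ) = (j : ℕ) :=
      ⟨⟨j, by omega⟩, rfl⟩
    obtain ⟨j₂, hj2v⟩ : ∃ j₂ : Fin (2 * m), (j₂ : ℕ) = (j : ℕ) + m :=
      ⟨⟨(j : ℕ) + m, by omega⟩, rfl⟩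
    have hY1 : Y j₁ = X j := by
      rw [hY, dif_pos (show (j₁ : ℕ) < m by rw [hj1v]; exact j.2)]
      congr 1
      exact Fin.ext (by simpa using hj1v)
    have hY2 : Y j₂ = c • X j := by
      rw [hY, dif_neg (show ¬((j₂ : ℕ) < m) by rw [hj2v]; omega)]
      congr 1
      exact congrArg X (Fin.ext (by show (j₂ : ℕ) - m = (j : ℕ); omega))
    have hw1 : w j₁ = Complex.exp d := by
      simp only [hwdef, hY1, hddef]
    have hw2 : w j₂ = Complex.exp ((c : ℂ) * d) := by
      simp only [hwdef, hY2]
      rw [hsmul l hl0, hsmul k hk0]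
      congr 1
      rw [hddef]; ring
    have hne : w j₁ ≠ 1 ∨ w j₂ ≠ 1 := by
      by_contra hco; push_neg at hco
      obtain ⟨h1, h2⟩ := hco
      rw [hw1, Complex.exp_eq_one_iff] at h1
      rw [hw2, Complex.exp_eq_one_iff] at h2
      obtain ⟨p, hp⟩ := h1
      obtain ⟨q, hq⟩ := h2
      have h2pi : (2 * (Real.pi : ℂ) * Complex.I) ≠ 0 := by
        simp [Real.pi_ne_zero, Complex.I_ne_zero]
      have hpne : p ≠ 0 := by
        rintro rfl
        simp only [Int.cast_zero, zero_mul] at hp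
        exact hdne hp
      have hcq : (c : ℂ) * p = q := by
        rw [hp] at hq
        apply mul_right_cancel₀ h2pi
        rw [← hq]; ring
      have hcr : c * (p : ℝ) = (q : ℝ) := by exact_mod_cast hcq
      have hpr : (p : ℝ) ≠ 0 := Int.cast_ne_zero.2 hpne
      refine hcirr ⟨(q : ℚ) / (p : ℚ), ?_⟩
      push_cast
      rw [div_eq_iff hpr]
      linarith [hcr]
    obtain ⟨j₀, hj₀⟩ : ∃ j₀ : Fin (2 * m), w j₀ ≠ 1 := hne.elim (⟨j₁, ·⟩) (⟨j₂, ·⟩)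
    -- factorize B
    have hfact : ∀ n : ℕ, B n k l = ((n : ℂ) ^ (2 * m))⁻¹ *
        ∏ j', ∑ a ∈ Finset.Icc (n + 1) (2 * n), (w j') ^ a := by
      intro n
      rw [hB]
      dsimp only
      congr 1
      rw [Finset.prod_univ_sum]
      refine Finset.sum_congr rfl fun t _ => ?_
      simp only [he]
      rw [aux_conj_exp _ (him k _), ← Complex.exp_add]
      rw [show -χ k (∑ j', (t j' : ℝ) • Y j') + χ l (∑ j', (t j' : ℝ) • Y j')
          = ∑ j', (t j' : ℂ) * (χ l (Y j') - χ k (Y j')) by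
        rw [hkey k hk0 _ _ _, hkey l hl0 _ _ _, neg_add_eq_sub, ← Finset.sum_sub_distrib]
        exact Finset.sum_congr rfl fun j' _ => by push_cast; ring]
      rw [Complex.exp_sum]
      refine Finset.prod_congr rfl fun j' _ => ?_
      rw [Complex.exp_nat_mul]
    -- norm bound
    have hbound : ∀ n : ℕ, 1 ≤ n → ‖B n k l‖ ≤ (n : ℝ)⁻¹ * (2 / ‖w j₀ - 1‖) := by
      intro n hn
      have hn0 : (0 : ℝ) < n := by exact_mod_cast hn
      set S : Fin (2 * m) → ℂ := fun j' => ∑ a ∈ Finset.Icc (n + 1) (2 * n), (w j') ^ a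
        with hSdef
      have hSle : ∀ j', ‖S j'‖ ≤ n := by
        intro j'
        calc ‖S j'‖ ≤ ∑ a ∈ Finset.Icc (n + 1) (2 * n), ‖(w j') ^ a‖ := norm_sum_le _ _
        _ = ∑ a ∈ Finset.Icc (n + 1) (2 * n), 1 := by
            refine Finset.sum_congr rfl fun a _ => ?_
            rw [norm_pow, hw, one_pow]
        _ = (n : ℝ) := by
            rw [Finset.sum_const, Nat.card_Icc, nsmul_eq_mul, mul_one]
            congr 1
            omega
      have hfacle : ∀ j', (n : ℝ)⁻¹ * ‖S j'‖ ≤ 1 := by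
        intro j'
        have := mul_le_mul_of_nonneg_left (hSle j') (inv_nonneg.2 hn0.le)
        rwa [inv_mul_cancel₀ hn0.ne'] at this
      rw [hfact n, norm_mul, norm_inv, norm_pow, Complex.norm_natCast, norm_prod]
      have hstep : ((n : ℝ) ^ (2 * m))⁻¹ * ∏ j', ‖S j'‖
          = ∏ j' : Fin (2 * m), (n : ℝ)⁻¹ * ‖S j'‖ := by
        rw [Finset.prod_mul_distrib, Finset.prod_const, ← inv_pow]
        simp
      rw [hstep]
      calc ∏ j' : Fin (2 * m), (n : ℝ)⁻¹ * ‖S j'‖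
          = ((n : ℝ)⁻¹ * ‖S j₀‖) * ∏ j' ∈ Finset.univ.erase j₀, (n : ℝ)⁻¹ * ‖S j'‖ :=
            (Finset.mul_prod_erase _ _ (Finset.mem_univ j₀)).symm
        _ ≤ ((n : ℝ)⁻¹ * ‖S j₀‖) * 1 := by
            refine mul_le_mul_of_nonneg_left ?_ (by positivity)
            exact Finset.prod_le_one (fun j' _ => by positivity) (fun j' _ => hfacle j')
        _ = (n : ℝ)⁻¹ * ‖S j₀‖ := mul_one _
        _ ≤ (n : ℝ)⁻¹ * (2 / ‖w j₀ - 1‖) := by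
            refine mul_le_mul_of_nonneg_left ?_ (by positivity)
            exact aux_geo_bound (w j₀) (hw j₀) hj₀ n
    have hB0 : Tendsto (fun n => B n k l) atTop (nhds 0) := by
      refine squeeze_zero_norm' (a := fun n : ℕ => (n : ℝ)⁻¹ * (2 / ‖w j₀ - 1‖)) ?_ ?_
      · filter_upwards [eventually_ge_atTop 1] with n hn using hbound n hn
      · have := (tendsto_inv_atTop_nhds_zero_nat (𝕜 := ℝ)).mul_const (2 / ‖w j₀ - 1‖)
        simpa using this
    have h2 : Tendsto (fun n => B n k l * (inner ℂ (F (vk k)) (F (vk l)) : ℂ)) atTop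
        (nhds 0) := by
      simpa using hB0.mul_const (inner ℂ (F (vk k)) (F (vk l)) : ℂ)
    have h3 := (Complex.continuous_re.tendsto 0).comp h2
    simpa [Function.comp_def] using h3
  -- combine
  have hlim : Tendsto (fun n => ∑ k, ∑ l,
      (B n k l * (inner ℂ (F (vk k)) (F (vk l)) : ℂ)).re) atTop
      (nhds (∑ k : Fin N, ∑ l : Fin N, if k = l then ‖F (vk k)‖ ^ 2 else 0)) := by
    refine tendsto_finset_sum _ fun k _ => tendsto_finset_sum _ fun l _ => ?_
    by_cases h : k = l
    · subst h; simpa using hdiag k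
    · simpa [h] using hoff k l h
  have : (∑ k : Fin N, ∑ l : Fin N, if k = l then ‖F (vk k)‖ ^ 2 else 0)
      = ∑ k, ‖F (vk k)‖ ^ 2 := by
    refine Finset.sum_congr rfl fun k _ => ?_
    simp
  rw [this] at hlim
  exact hlim.congr fun n => (hAeq n).symm
end
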